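/- arXiv:2102.06115 — 5 statements merged into one kernel-verified Lean document; each statement's English description precedes it below -/
import Mathlib

section
/- Double-budget trick: if W_1 is an outcome with c(W_1) ≤ b maximizing total social welfare sw over all budget-feasible outcomes, and W_2 is any district-fair outcome with c(W_2) ≤ b, then W_1 ∪ W_2 is district-fair, has cost at most 2b, and has total social welfare at least that of any budget-feasible district-fair outcome. -/
open Finset

theorem Finset.sum_union_le_add {ι M : Type*} [DecidableEq ι] [AddCommMonoid M] [PartialOrder M]
    [CanonicallyOrderedAdd M] (s t : Finset ι) (f : ι → M) :
    ∑ x ∈ s ∪ t, f x ≤ ∑ x ∈ s, f x + ∑ x ∈ t, f x :=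
  sum_union_inter (f := f) ▸ le_self_add

theorem double_budget_trick_general
    {P : Type*} [DecidableEq P] {k : ℕ}
    (c : P → ℕ) (sw : Fin k → P → ℕ) (b : ℕ) (f : Fin k → ℕ)
    (W1 W2 : Finset P)
    (hW1b : ∑ x ∈ W1, c x ≤ b)
    (hW1max : ∀ A : Finset P, ∑ x ∈ A, c x ≤ b →
      ∑ i, ∑ x ∈ A, sw i x ≤ ∑ i, ∑ x ∈ W1, sw i x)
    (hW2b : ∑ x ∈ W2, c x ≤ b)
    (hW2fair : ∀ i, f i ≤ ∑ x ∈ W2, sw i x) :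
    (∀ i, f i ≤ ∑ x ∈ W1 ∪ W2, sw i x) ∧
    (∑ x ∈ W1 ∪ W2, c x ≤ 2 * b) ∧
    (∀ W : Finset P, ∑ x ∈ W, c x ≤ b → (∀ i, f i ≤ ∑ x ∈ W, sw i x) →
      ∑ i, ∑ x ∈ W, sw i x ≤ ∑ i, ∑ x ∈ W1 ∪ W2, sw i x) := by
  refine ⟨fun i => (hW2fair i).trans (sum_le_sum_of_subset subset_union_right), ?_,
    fun W hWb _ => (hW1max W hWb).trans ?_⟩
  · calc ∑ x ∈ W1 ∪ W2, c x ≤ ∑ x ∈ W1, c x + ∑ x ∈ W2, c x := sum_union_le_add W1 W2 c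
      _ ≤ b + b := add_le_add hW1b hW2b
      _ = 2 * b := (two_mul b).symm
  · gcongr
    exact subset_union_left

/-- Double-budget trick. -/
theorem double_budget_trick
    {P : Type*} [Fintype P] [DecidableEq P] {k : ℕ}
    (c : P → ℕ) (sw : Fin k → P → ℕ) (b : ℕ) (bd : Fin k → ℕ)
    (hb : ∑ i, bd i = b) (f : Fin k → ℕ)
    (hf : ∀ i, IsGreatest
      {v | ∃ A : Finset P, ∑ x ∈ A, c x ≤ bd i ∧ v = ∑ x ∈ A, sw i x} (f i))
    (W1 W2 : Finset P)
    (hW1b : ∑ x ∈ W1, c x ≤ b)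
    (hW1max : ∀ A : Finset P, ∑ x ∈ A, c x ≤ b →
      ∑ i, ∑ x ∈ A, sw i x ≤ ∑ i, ∑ x ∈ W1, sw i x)
    (hW2b : ∑ x ∈ W2, c x ≤ b)
    (hW2fair : ∀ i, f i ≤ ∑ x ∈ W2, sw i x) :
    (∀ i, f i ≤ ∑ x ∈ W1 ∪ W2, sw i x) ∧
    (∑ x ∈ W1 ∪ W2, c x ≤ 2 * b) ∧
    (∀ W : Finset P, ∑ x ∈ W, c x ≤ b → (∀ i, f i ≤ ∑ x ∈ W, sw i x) →
      ∑ i, ∑ x ∈ W, sw i x ≤ ∑ i, ∑ x ∈ W1 ∪ W2, sw i x) :=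
  double_budget_trick_general c sw b f W1 W2 hW1b hW1max hW2b hW2fair
end

section
/- For any district i, the per-district coverage function cover_i(W) = b_i − resid_i(W) is a nondecreasing submodular set function of W, where resid_i(W) is the minimum cost of a fractional outcome p (with p_j = 0 for x_j ∈ W, 0 ≤ p_j ≤ 1) such that sw_i(W) + sw_i(p) ≥ f_i. -/
/-!
`resid W` is the value of a fractional knapsack LP. By LP duality it is the maximum, over
prices `y ≥ 0` per unit of missing welfare, of
`y * f - ∑ j, max (y * sw j - c j) 0 - ∑ j ∈ W, min (y * sw j) (c j)`,
a modular function of `W` whose weights `min (y * sw j) (c j)` are nonnegative and nondecreasing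
in `y`. A maximum over such a chain of modular functions is antitone and supermodular, hence
`cover = b - resid` is monotone and submodular. Strong duality is witnessed by the greedy
solution at the threshold price: the weighted quantile of the cost ratios `c j / sw j` at which
the items outside `W` first supply the missing welfare.
-/

open Finset

/-- A fractional outcome `p` is feasible for district welfare `sw`, fair share
`f` and (integral) outcome `W` if it has entries in `[0,1]`, is supported off
`W`, and together with `W` reaches welfare `f`. -/
def FracFeasible {m : ℕ} (sw : Fin m → ℝ) (f : ℝ) (W : Finset (Fin m))
    (p : Fin m → ℝ) : Prop :=
  (∀ j, 0 ≤ p j ∧ p j ≤ 1) ∧ (∀ j ∈ W, p j = 0) ∧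
    f ≤ (∑ j ∈ W, sw j) + ∑ j, p j * sw j

/-- `resid` is the minimum cost of a feasible fractional completion. -/
noncomputable def resid {m : ℕ} (c sw : Fin m → ℝ) (f : ℝ)
    (W : Finset (Fin m)) : ℝ :=
  sInf ((fun p : Fin m → ℝ => ∑ j, p j * c j) '' {p | FracFeasible sw f W p})

/-- `cover` is the budget minus the residual budget requirement. -/
noncomputable def cover {m : ℕ} (c sw : Fin m → ℝ) (f b : ℝ)
    (W : Finset (Fin m)) : ℝ :=
  b - resid c sw f W

theorem mul_le_max_zero {t : ℝ} (ht₀ : 0 ≤ t) (ht₁ : t ≤ 1) (u : ℝ) : t * u ≤ max u 0 := by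
  rcases le_total 0 u with hu | hu
  · exact (mul_le_of_le_one_left hu ht₁).trans (le_max_left _ _)
  · exact (mul_nonpos_of_nonneg_of_nonpos ht₀ hu).trans (le_max_right _ _)

theorem Finset.sum_mul_eq_sum_compl_of_eq_zero {ι : Type*} [Fintype ι] [DecidableEq ι]
    {W : Finset ι} {p : ι → ℝ} (hp : ∀ j ∈ W, p j = 0) (g : ι → ℝ) :
    ∑ j, p j * g j = ∑ j ∈ Wᶜ, p j * g j :=
  (sum_subset (subset_univ _) fun j _ hj => by rw [hp j (by simpa using hj), zero_mul]).symm

theorem Finset.sum_filter_congr_of_ne_zero {ι M : Type*} [AddCommMonoid M] {N : Finset ι}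
    {g : ι → M} {P Q : ι → Prop} [DecidablePred P] [DecidablePred Q]
    (h : ∀ j ∈ N, g j ≠ 0 → (P j ↔ Q j)) :
    ∑ j ∈ N with P j, g j = ∑ j ∈ N with Q j, g j := by
  rw [sum_filter, sum_filter]
  refine sum_congr rfl fun j hj => ?_
  by_cases hg : g j = 0
  · simp [hg]
  · simp only [h j hj hg]

section MaxOfModular

variable {ι β : Type*} {s : Set β} {k : β → ℝ} {w : β → ι → ℝ}
  {F : Finset ι → ℝ}

theorem antitone_of_isGreatest_modular (hw : ∀ y ∈ s, ∀ j, 0 ≤ w y j)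
    (hF : ∀ W, IsGreatest ((fun y => k y - ∑ j ∈ W, w y j) '' s) (F W)) : Antitone F := by
  intro A B hAB
  obtain ⟨y, hy, hyB⟩ := (hF B).1
  calc F B = k y - ∑ j ∈ B, w y j := hyB.symm
    _ ≤ k y - ∑ j ∈ A, w y j := by
      gcongr
      exact fun j _ _ => hw y hy j
    _ ≤ F A := (hF A).2 ⟨y, hy, rfl⟩

/-- Where the two maximisers `y₁` (for `insert x A`) and `y₂` (for `B`) lie in the chain
decides which of them to evaluate at `A` and at `insert x B`. -/
theorem supermodular_of_isGreatest_modular [DecidableEq ι] [LinearOrder β]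
    (hw : ∀ j, MonotoneOn (w · j) s)
    (hF : ∀ W, IsGreatest ((fun y => k y - ∑ j ∈ W, w y j) '' s) (F W))
    {A B : Finset ι} (hAB : A ⊆ B) {x : ι} (hxB : x ∉ B) :
    F B + F (insert x A) ≤ F A + F (insert x B) := by
  have hxA : x ∉ A := fun h => hxB (hAB h)
  obtain ⟨y₁, hy₁, hxA_eq⟩ := (hF (insert x A)).1
  obtain ⟨y₂, hy₂, hB_eq⟩ := (hF B).1
  have hsplit₁ := sum_sdiff hAB (f := w y₁)
  have hsplit₂ := sum_sdiff hAB (f := w y₂)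
  simp only [sum_insert hxA] at hxA_eq
  rcases le_total y₂ y₁ with h | h
  · have hA_ge := (hF A).2 ⟨y₁, hy₁, rfl⟩
    have hxB_ge := (hF (insert x B)).2 ⟨y₂, hy₂, rfl⟩
    simp only [sum_insert hxB] at hxB_ge
    have hwx := hw x hy₂ hy₁ h
    linarith
  · have hA_ge := (hF A).2 ⟨y₂, hy₂, rfl⟩
    have hxB_ge := (hF (insert x B)).2 ⟨y₁, hy₁, rfl⟩
    simp only [sum_insert hxB] at hxB_ge
    have hw_sdiff : ∑ j ∈ B \ A, w y₁ j ≤ ∑ j ∈ B \ A, w y₂ j :=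
      sum_le_sum fun j _ => hw j hy₁ hy₂ h
    linarith

end MaxOfModular

section FractionalKnapsack

variable {ι : Type*}

theorem exists_weighted_quantile (N : Finset ι) (ρ w : ι → ℝ) (hρ : ∀ j, 0 ≤ ρ j)
    (hw : ∀ j, 0 ≤ w j) {d : ℝ} (hd₀ : 0 ≤ d) (hd : d ≤ ∑ j ∈ N, w j) :
    ∃ y, 0 ≤ y ∧ ∑ j ∈ N with ρ j < y, w j ≤ d ∧ d ≤ ∑ j ∈ N with ρ j ≤ y, w j := by
  set S : ℝ → ℝ := fun y => ∑ j ∈ N with ρ j ≤ y, w j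
  set Y : Finset ℝ := insert 0 (N.image ρ)
  have hY : ∀ y ∈ Y, 0 ≤ y := by
    simp only [Y, mem_insert, mem_image]
    rintro y (rfl | ⟨j, -, rfl⟩)
    exacts [le_rfl, hρ j]
  have hYne : Y.Nonempty := insert_nonempty _ _
  have hS_top : d ≤ S (Y.max' hYne) := by
    refine hd.trans_eq (sum_congr ?_ fun _ _ => rfl).symm
    exact filter_true_of_mem fun j hj => Y.le_max' _ (mem_insert_of_mem (mem_image_of_mem ρ hj))
  have hY'ne : (Y.filter fun y => d ≤ S y).Nonempty :=
    ⟨_, mem_filter.2 ⟨Y.max'_mem hYne, hS_top⟩⟩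
  obtain ⟨hy₀Y, hy₀S⟩ := mem_filter.1 ((Y.filter fun y => d ≤ S y).min'_mem hY'ne)
  set y₀ := (Y.filter fun y => d ≤ S y).min' hY'ne
  refine ⟨y₀, hY y₀ hy₀Y, ?_, hy₀S⟩
  rcases (N.filter fun j => ρ j < y₀).eq_empty_or_nonempty with hG | hG
  · rw [hG, sum_empty]
    exact hd₀
  obtain ⟨j, hjG, hj⟩ := exists_max_image _ ρ hG
  have hjN := (mem_filter.1 hjG).1
  -- otherwise the largest ratio below `y₀` would be a smaller admissible candidate
  by_contra! hlt
  have hSj : d ≤ S (ρ j) :=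
    hlt.le.trans <| sum_le_sum_of_subset_of_nonneg
      (fun i hi => mem_filter.2 ⟨(mem_filter.1 hi).1, hj i hi⟩) fun _ _ _ => hw _
  have hy₀_le := (Y.filter fun y => d ≤ S y).min'_le (ρ j)
    (mem_filter.2 ⟨mem_insert_of_mem (mem_image_of_mem ρ hjN), hSj⟩)
  exact (mem_filter.1 hjG).2.not_ge hy₀_le

variable (N : Finset ι) (c sw : ι → ℝ)

theorem exists_threshold (hc : ∀ j, 0 ≤ c j) (hsw : ∀ j, 0 ≤ sw j) {d : ℝ} (hd₀ : 0 ≤ d)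
    (hd : d ≤ ∑ j ∈ N, sw j) :
    ∃ y, 0 ≤ y ∧ ∑ j ∈ N with c j < y * sw j, sw j ≤ d ∧
      d ≤ ∑ j ∈ N with c j ≤ y * sw j, sw j := by
  obtain ⟨y, hy, hlo, hhi⟩ := exists_weighted_quantile N (fun j => c j / sw j) sw
    (fun j => div_nonneg (hc j) (hsw j)) hsw hd₀ hd
  -- terms with `sw j = 0` contribute nothing, so the junk value `c j / 0 = 0` is harmless
  have hpos : ∀ j, sw j ≠ 0 → 0 < sw j := fun j h => (hsw j).lt_of_ne' h
  refine ⟨y, hy, ?_, ?_⟩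
  · rwa [sum_filter_congr_of_ne_zero fun j _ h => (div_lt_iff₀ (hpos j h)).symm]
  · rwa [sum_filter_congr_of_ne_zero fun j _ h => (div_le_iff₀ (hpos j h)).symm]

/-- The greedy solution: items strictly cheaper than the price `y` are bought in full and
items priced exactly `y` fractionally; complementary slackness makes its cost the dual value. -/
theorem exists_greedy_of_threshold {y d : ℝ} (hlo : ∑ j ∈ N with c j < y * sw j, sw j ≤ d)
    (hhi : d ≤ ∑ j ∈ N with c j ≤ y * sw j, sw j) :
    ∃ p : ι → ℝ, (∀ j, 0 ≤ p j ∧ p j ≤ 1) ∧ (∀ j ∉ N, p j = 0) ∧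
      ∑ j ∈ N, p j * sw j = d ∧
      ∑ j ∈ N, p j * c j = y * d - ∑ j ∈ N, max (y * sw j - c j) 0 := by
  classical
  set F := N.filter fun j => c j < y * sw j
  set T := N.filter fun j => c j ≤ y * sw j
  have hFT : F ⊆ T := fun j hj => mem_filter.2 ⟨(mem_filter.1 hj).1, (mem_filter.1 hj).2.le⟩
  set a := ∑ j ∈ F, sw j
  set θ := (d - a) / (∑ j ∈ T, sw j - a)
  have hsw_tie : ∑ j ∈ T \ F, sw j = ∑ j ∈ T, sw j - a := by
    rw [eq_sub_iff_add_eq, sum_sdiff hFT]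
  have hθ : θ * (∑ j ∈ T, sw j - a) = d - a := by
    rcases (hlo.trans hhi).eq_or_lt with h | h
    · rw [← h, sub_self, mul_zero, le_antisymm hlo (hhi.trans_eq h.symm), sub_self]
    · exact div_mul_cancel₀ _ (sub_ne_zero.2 h.ne')
  have hc_tie : ∑ j ∈ T \ F, c j = y * ∑ j ∈ T \ F, sw j := by
    rw [mul_sum]
    refine sum_congr rfl fun j hj => ?_
    obtain ⟨hjT, hjF⟩ := mem_sdiff.1 hj
    refine le_antisymm (mem_filter.1 hjT).2 (not_lt.1 fun h => hjF ?_)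
    exact mem_filter.2 ⟨(mem_filter.1 hjT).1, h⟩
  have hmax : ∑ j ∈ N, max (y * sw j - c j) 0 = ∑ j ∈ F, (y * sw j - c j) := by
    rw [sum_filter]
    refine sum_congr rfl fun j _ => ?_
    split_ifs with h
    · exact max_eq_left (by linarith)
    · exact max_eq_right (by linarith [not_lt.1 h])
  set p : ι → ℝ := fun j => if j ∈ F then 1 else if j ∈ T then θ else 0
  have hsum : ∀ g : ι → ℝ, ∑ j ∈ N, p j * g j = ∑ j ∈ F, g j + θ * ∑ j ∈ T \ F, g j := by
    intro g
    have hT : ∀ j ∈ N, j ∉ T → p j * g j = 0 := fun j _ hj => by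
      simp [p, hj, show j ∉ F from fun h => hj (hFT h)]
    rw [← sum_subset (filter_subset _ N) hT, ← sum_sdiff hFT, mul_sum, add_comm]
    congr 1 <;> refine sum_congr rfl fun j hj => ?_
    · simp [p, hj]
    · simp [p, (mem_sdiff.1 hj).1, (mem_sdiff.1 hj).2]
  refine ⟨p, fun j => ?_, fun j hj => ?_, ?_, ?_⟩
  · have hs := sub_nonneg.2 (hlo.trans hhi)
    simp only [p]
    split_ifs
    exacts [⟨zero_le_one, le_rfl⟩, ⟨div_nonneg (sub_nonneg.2 hlo) hs,
      div_le_one_of_le₀ (sub_le_sub_right hhi a) hs⟩, ⟨le_rfl, zero_le_one⟩]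
  · simp [p, F, T, hj]
  · rw [hsum, hsw_tie, hθ]
    ring
  · rw [hsum, hc_tie, hsw_tie, hmax, sum_sub_distrib, ← mul_sum]
    linear_combination y * hθ

end FractionalKnapsack

section Residual

variable {m : ℕ} (c sw : Fin m → ℝ) (f : ℝ)

/-- The objective of the LP dual of `resid c sw f W`, with price `y` per unit of missing
welfare. -/
noncomputable def dualVal (y : ℝ) (W : Finset (Fin m)) : ℝ :=
  y * (f - ∑ j ∈ W, sw j) - ∑ j ∈ Wᶜ, max (y * sw j - c j) 0

theorem dualVal_eq_sub_sum_min (y : ℝ) (W : Finset (Fin m)) :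
    dualVal c sw f y W =
      y * f - ∑ j, max (y * sw j - c j) 0 - ∑ j ∈ W, min (y * sw j) (c j) := by
  have hsplit : ∀ j, max (y * sw j - c j) 0 + min (y * sw j) (c j) = y * sw j := fun j => by
    rcases le_total (y * sw j) (c j) with h | h
    · rw [max_eq_right (sub_nonpos.2 h), min_eq_left h, zero_add]
    · rw [max_eq_left (sub_nonneg.2 h), min_eq_right h, sub_add_cancel]
  rw [dualVal, ← sum_add_sum_compl W, mul_sub, mul_sum, ← sum_congr rfl fun j _ => hsplit j,
    sum_add_distrib]
  ring

variable {c sw f}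

theorem FracFeasible.sub_sum_le_sum_compl {W : Finset (Fin m)} {p : Fin m → ℝ}
    (hp : FracFeasible sw f W p) : f - ∑ j ∈ W, sw j ≤ ∑ j ∈ Wᶜ, p j * sw j := by
  rw [sub_le_iff_le_add', ← sum_mul_eq_sum_compl_of_eq_zero hp.2.1]
  exact hp.2.2

theorem exists_fracFeasible_of_empty (hsw : ∀ j, 0 ≤ sw j) (h : ∃ p, FracFeasible sw f ∅ p)
    (W : Finset (Fin m)) : ∃ p, FracFeasible sw f W p := by
  obtain ⟨p, hp⟩ := h
  set q : Fin m → ℝ := fun j => if j ∈ W then 0 else p j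
  have hq : ∀ j ∈ W, q j = 0 := fun j hj => if_pos hj
  have hwel : ∑ j, q j * sw j = ∑ j ∈ Wᶜ, p j * sw j := by
    rw [sum_mul_eq_sum_compl_of_eq_zero hq]
    exact sum_congr rfl fun j hj => by simp [q, mem_compl.1 hj]
  have hW : ∑ j ∈ W, p j * sw j ≤ ∑ j ∈ W, sw j :=
    sum_le_sum fun j _ => mul_le_of_le_one_left (hsw j) (hp.1 j).2
  refine ⟨q, fun j => ?_, hq, ?_⟩
  · by_cases hj : j ∈ W
    · simp [q, hj]
    · simpa [q, hj] using hp.1 j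
  · have h := hp.2.2
    rw [sum_empty, zero_add, ← sum_add_sum_compl W] at h
    rw [hwel]
    linarith

theorem resid_le_cost (hc : ∀ j, 0 ≤ c j) {W : Finset (Fin m)} {p : Fin m → ℝ}
    (hp : FracFeasible sw f W p) : resid c sw f W ≤ ∑ j, p j * c j :=
  csInf_le ⟨0, by rintro _ ⟨q, hq, rfl⟩; exact sum_nonneg fun j _ => mul_nonneg (hq.1 j).1 (hc j)⟩
    ⟨p, hp, rfl⟩

theorem dualVal_le_cost {y : ℝ} (hy : 0 ≤ y) {W : Finset (Fin m)} {p : Fin m → ℝ}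
    (hp : FracFeasible sw f W p) : dualVal c sw f y W ≤ ∑ j, p j * c j := by
  have hterm : ∀ j, y * (p j * sw j) ≤ p j * c j + max (y * sw j - c j) 0 := fun j =>
    calc y * (p j * sw j) = p j * c j + p j * (y * sw j - c j) := by ring
      _ ≤ _ := by gcongr; exact mul_le_max_zero (hp.1 j).1 (hp.1 j).2 _
  calc dualVal c sw f y W
      ≤ y * ∑ j ∈ Wᶜ, p j * sw j - ∑ j ∈ Wᶜ, max (y * sw j - c j) 0 := by
        rw [dualVal]
        gcongr
        exact hp.sub_sum_le_sum_compl
    _ ≤ ∑ j ∈ Wᶜ, p j * c j := by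
        rw [mul_sum, sub_le_iff_le_add, ← sum_add_distrib]
        exact sum_le_sum fun j _ => hterm j
    _ = ∑ j, p j * c j := (sum_mul_eq_sum_compl_of_eq_zero hp.2.1 c).symm

theorem exists_resid_le_dualVal (hc : ∀ j, 0 ≤ c j) (hsw : ∀ j, 0 ≤ sw j)
    {W : Finset (Fin m)} (hne : ∃ p, FracFeasible sw f W p) :
    ∃ y, 0 ≤ y ∧ resid c sw f W ≤ dualVal c sw f y W := by
  obtain ⟨p₀, hp₀⟩ := hne
  rcases le_or_gt (f - ∑ j ∈ W, sw j) 0 with hd | hd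
  · have hzero : FracFeasible sw f W 0 :=
      ⟨fun _ => ⟨le_rfl, zero_le_one⟩, fun _ _ => rfl, by simpa using hd⟩
    refine ⟨0, le_rfl, (resid_le_cost hc hzero).trans_eq ?_⟩
    simp [dualVal, hc]
  have htot : f - ∑ j ∈ W, sw j ≤ ∑ j ∈ Wᶜ, sw j :=
    hp₀.sub_sum_le_sum_compl.trans <|
      sum_le_sum fun j _ => mul_le_of_le_one_left (hsw j) (hp₀.1 j).2
  obtain ⟨y, hy, hlo, hhi⟩ := exists_threshold Wᶜ c sw hc hsw hd.le htot
  obtain ⟨p, hbd, hsupp, hwel, hcost⟩ := exists_greedy_of_threshold Wᶜ c sw hlo hhi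
  have hsupp' : ∀ j ∈ W, p j = 0 := fun j hj => hsupp j (by simpa using hj)
  have hp : FracFeasible sw f W p := by
    refine ⟨hbd, hsupp', ?_⟩
    rw [sum_mul_eq_sum_compl_of_eq_zero hsupp', hwel]
    linarith
  refine ⟨y, hy, (resid_le_cost hc hp).trans_eq ?_⟩
  rw [sum_mul_eq_sum_compl_of_eq_zero hsupp', hcost, dualVal]

theorem isGreatest_dualVal_resid (hc : ∀ j, 0 ≤ c j) (hsw : ∀ j, 0 ≤ sw j)
    {W : Finset (Fin m)} (hne : ∃ p, FracFeasible sw f W p) :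
    IsGreatest ((fun y => dualVal c sw f y W) '' Set.Ici 0) (resid c sw f W) := by
  obtain ⟨y, hy, hle⟩ := exists_resid_le_dualVal hc hsw hne
  obtain ⟨p₀, hp₀⟩ := hne
  have hdual : ∀ y, 0 ≤ y → dualVal c sw f y W ≤ resid c sw f W := fun y hy =>
    le_csInf ⟨_, p₀, hp₀, rfl⟩ fun _ ⟨p, hp, hcost⟩ => hcost ▸ dualVal_le_cost hy hp
  exact ⟨⟨y, hy, le_antisymm (hdual y hy) hle⟩, fun _ ⟨y, hy, hval⟩ => hval ▸ hdual y hy⟩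

end Residual

theorem cover_monotone_submodular_general {m : ℕ} (c sw : Fin m → ℝ) (f b : ℝ)
    (hc : ∀ j, 0 ≤ c j) (hsw : ∀ j, 0 ≤ sw j)
    (hach : ∃ p, FracFeasible sw f ∅ p ∧ ∑ j, p j * c j ≤ b) :
    (∀ A B : Finset (Fin m), A ⊆ B → cover c sw f b A ≤ cover c sw f b B) ∧
    (∀ A B : Finset (Fin m), A ⊆ B → ∀ x ∉ B,
      cover c sw f b (insert x B) - cover c sw f b B ≤
        cover c sw f b (insert x A) - cover c sw f b A) := by
  obtain ⟨p, hp, -⟩ := hach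
  set w : ℝ → Fin m → ℝ := fun y j => min (y * sw j) (c j)
  have hresid : ∀ W, IsGreatest ((fun y => y * f - ∑ j, max (y * sw j - c j) 0 -
      ∑ j ∈ W, w y j) '' Set.Ici 0) (resid c sw f W) := fun W => by
    simpa only [dualVal_eq_sub_sum_min] using
      isGreatest_dualVal_resid hc hsw (exists_fracFeasible_of_empty hsw ⟨p, hp⟩ W)
  have hw_mono : ∀ j, Monotone (w · j) := fun j _ _ h =>
    min_le_min_right _ (mul_le_mul_of_nonneg_right h (hsw j))
  refine ⟨fun A B hAB => ?_, fun A B hAB x hxB => ?_⟩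
  · have hanti := antitone_of_isGreatest_modular
      (fun y (hy : 0 ≤ y) j => le_min (mul_nonneg hy (hsw j)) (hc j)) hresid hAB
    exact sub_le_sub_left hanti b
  · have hsuper := supermodular_of_isGreatest_modular (fun j => (hw_mono j).monotoneOn _)
      hresid hAB hxB
    simp only [cover]
    linarith

/-- the per-district coverage function is nondecreasing and
submodular. -/
theorem cover_monotone_submodular {m : ℕ} (c sw : Fin m → ℝ) (f b : ℝ)
    (hc : ∀ j, 0 ≤ c j) (hsw : ∀ j, 0 ≤ sw j) (hf : 0 ≤ f) (hb : 0 ≤ b)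
    (hach : ∃ p, FracFeasible sw f ∅ p ∧ ∑ j, p j * c j ≤ b) :
    (∀ A B : Finset (Fin m), A ⊆ B → cover c sw f b A ≤ cover c sw f b B) ∧
    (∀ A B : Finset (Fin m), A ⊆ B → ∀ x ∉ B,
      cover c sw f b (insert x B) - cover c sw f b B ≤
        cover c sw f b (insert x A) - cover c sw f b A) :=
  cover_monotone_submodular_general c sw f b hc hsw hach
end

section
/- DF1 completion: given an outcome W with cover(W) = b − r (where b = ∑_i b_i and r ≥ 0), there exists a superset W' ⊇ W that is DF1 and satisfies c(W') ≤ c(W) + r. -/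
/-!
Greedily add a project whose coverage gain is at least its cost while the outcome is not DF1.
Each step keeps `cost − cover` from increasing and shrinks the complement, so the process stops
at a DF1 superset `W'` with `c(W') − c(W) ≤ cover W' − cover W ≤ b − (b − r) = r`.
-/

open Finset

/-- An outcome is district-fair up to one project. -/
def DF1 {m k : ℕ} (sw : Fin k → Fin m → ℕ) (f : Fin k → ℝ)
    (W : Finset (Fin m)) : Prop :=
  ∀ i, f i ≤ (∑ j ∈ W, (sw i j : ℝ)) + (((Finset.univ \ W).sup (sw i) : ℕ) : ℝ)

theorem Finset.exists_superset_sum_sub_le {α : Type*} [Fintype α] [DecidableEq α]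
    (P : Finset α → Prop) (c : α → ℝ) (g : Finset α → ℝ)
    (hstep : ∀ s, ¬ P s → ∃ x ∉ s, g s + c x ≤ g (insert x s)) (s : Finset α) :
    ∃ t, s ⊆ t ∧ P t ∧ ∑ j ∈ t, c j - g t ≤ ∑ j ∈ s, c j - g s := by
  by_cases hs : P s
  · exact ⟨s, subset_rfl, hs, le_rfl⟩
  obtain ⟨x, hx, hgain⟩ := hstep s hs
  obtain ⟨t, hst, ht, hcost⟩ := exists_superset_sum_sub_le P c g hstep (insert x s)
  refine ⟨t, (subset_insert x s).trans hst, ht, ?_⟩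
  rw [sum_insert hx] at hcost
  linarith
termination_by sᶜ.card
decreasing_by exact card_lt_card (compl_ssubset_compl.2 (ssubset_insert hx))

theorem DF1_completion_general
    {m k : ℕ} (c : Fin m → ℝ) (sw : Fin k → Fin m → ℕ) (f : Fin k → ℝ)
    (b : ℝ) (cover : Finset (Fin m) → ℝ)
    (hcov_le : ∀ W : Finset (Fin m), cover W ≤ b)
    (hkey : ∀ W : Finset (Fin m), ¬ DF1 sw f W →
      ∃ x ∉ W, cover W + c x ≤ cover (insert x W))
    (W : Finset (Fin m)) (r : ℝ) (hW : cover W = b - r) :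
    ∃ W' : Finset (Fin m), W ⊆ W' ∧ DF1 sw f W' ∧
      (∑ j ∈ W', c j) ≤ (∑ j ∈ W, c j) + r := by
  obtain ⟨W', hWW', hfair, hcost⟩ := exists_superset_sum_sub_le (DF1 sw f) c cover hkey W
  exact ⟨W', hWW', hfair, by linarith [hcov_le W']⟩

/-- DF1 completion.  Given a total coverage function `cover`
(bounded by the budget `b`, and such that any non-DF1 outcome admits a project
whose addition increases coverage by at least its cost), any outcome `W` with
`cover W = b - r` can be completed to a DF1 superset `W'` of extra cost at
most `r`. -/
theorem DF1_completion
    {m k : ℕ} (c : Fin m → ℝ) (sw : Fin k → Fin m → ℕ) (f : Fin k → ℝ)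
    (b : ℝ) (cover : Finset (Fin m) → ℝ)
    (hc : ∀ j, 0 ≤ c j)
    (hcov_le : ∀ W : Finset (Fin m), cover W ≤ b)
    (hkey : ∀ W : Finset (Fin m), ¬ DF1 sw f W →
      ∃ x ∉ W, cover W + c x ≤ cover (insert x W))
    (W : Finset (Fin m)) (r : ℝ) (hr : 0 ≤ r) (hW : cover W = b - r) :
    ∃ W' : Finset (Fin m), W ⊆ W' ∧ DF1 sw f W' ∧
      (∑ j ∈ W', c j) ≤ (∑ j ∈ W, c j) + r :=
  DF1_completion_general c sw f b cover hcov_le hkey W r hW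
end

section
/- In the circular-preferences instance, the only district-fair budget-feasible integral outcome consists of all non-dummy projects: with k−1 non-dummy projects x_1,…,x_{k−1} of unit cost, budget b = k−1, and district i (for i ≤ k−1) valuing x_i at 1+ε and its cyclic successor at 1 with fair share f_i = 1+ε, every integral outcome W with c(W) ≤ b and sw_i(W) ≥ f_i for all i ≤ k−1 must contain every x_j with j ≤ k−1, hence W = {x_1,…,x_{k−1}}. -/
/-!
Without its own project `x_i`, district `i` values at most one project of `W`, its cyclic
successor, at `1 < 1 + ε`; so a fair `W` contains all `n` projects `x_i`, which already exhaust
the budget.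
-/

theorem Finset.sum_le_of_eq_zero_of_ne {α M : Type*} [AddCommMonoid M] [Preorder M]
    {s : Finset α} {f : α → M} {a : α} {c : M} (hc : 0 ≤ c) (ha : f a ≤ c)
    (h : ∀ x ∈ s, x ≠ a → f x = 0) : ∑ x ∈ s, f x ≤ c := by
  by_cases has : a ∈ s
  · rwa [Finset.sum_eq_single_of_mem a has h]
  · rwa [Finset.sum_eq_zero fun x hx => h x hx fun hxa => has (hxa ▸ hx)]

theorem Finset.mem_of_one_lt_sum {α : Type*} {W : Finset α} {v : α → ℝ} {p q : α}
    (hq : v q ≤ 1) (hzero : ∀ x, x ≠ p → x ≠ q → v x = 0) (hW : 1 < ∑ x ∈ W, v x) :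
    p ∈ W := by
  by_contra hp
  refine hW.not_ge (Finset.sum_le_of_eq_zero_of_ne zero_le_one hq fun x hx hxq => ?_)
  exact hzero x (fun hxp => hp (hxp ▸ hx)) hxq

theorem circular_instance_unique_fair_outcome_general
    {n : ℕ} (ε : ℝ) (hε0 : 0 < ε)
    (σ : Fin n → Fin n)
    (sw : Fin n → Fin (n + n) → ℝ)
    (hsw2 : ∀ i, sw i (Fin.castAdd n (σ i)) = 1)
    (hsw0 : ∀ i x, x ≠ Fin.castAdd n i → x ≠ Fin.castAdd n (σ i) → sw i x = 0)
    (W : Finset (Fin (n + n))) (hcard : W.card ≤ n)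
    (hfair : ∀ i, 1 + ε ≤ ∑ x ∈ W, sw i x) :
    W = Finset.univ.image (fun j : Fin n => Fin.castAdd n j) := by
  have hmem : ∀ i, Fin.castAdd n i ∈ W := fun i =>
    Finset.mem_of_one_lt_sum (hsw2 i).le (hsw0 i) (by linarith [hfair i])
  refine (Finset.eq_of_subset_of_card_le ?_ ?_).symm
  · rintro _ hx
    obtain ⟨j, -, rfl⟩ := Finset.mem_image.mp hx
    exact hmem j
  · rwa [Finset.card_image_of_injective _ (Fin.castAdd_injective n n), Finset.card_univ,
      Fintype.card_fin]

/-- in the circular-preferences instance, the only district-fair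
budget-feasible integral outcome consists of all non-dummy projects. -/
theorem circular_instance_unique_fair_outcome
    {n : ℕ} (hn : 2 ≤ n) (ε : ℝ) (hε0 : 0 < ε) (hε1 : ε < 1)
    (σ : Fin n → Fin n) (hσ : ∀ i, σ i ≠ i)
    (sw : Fin n → Fin (n + n) → ℝ)
    (hsw1 : ∀ i, sw i (Fin.castAdd n i) = 1 + ε)
    (hsw2 : ∀ i, sw i (Fin.castAdd n (σ i)) = 1)
    (hsw0 : ∀ i x, x ≠ Fin.castAdd n i → x ≠ Fin.castAdd n (σ i) → sw i x = 0)
    (W : Finset (Fin (n + n))) (hcard : W.card ≤ n)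
    (hfair : ∀ i, 1 + ε ≤ ∑ x ∈ W, sw i x) :
    W = Finset.univ.image (fun j : Fin n => Fin.castAdd n j) :=
  circular_instance_unique_fair_outcome_general ε hε0 σ sw hsw2 hsw0 W hcard hfair
end

section
/- In the X3C reduction instance, a district-fair budget-feasible outcome with social welfare at least 3n + (2n+M)M exists if and only if the underlying exact-3-cover instance has a solution. -/
/-!
Every dummy project is worth `M` to the total welfare, while all real projects together are worth
at most `3m < M`. So the welfare target forces an outcome to buy all `2n + M` dummy projects, which
leaves budget for at most `n` real projects; these must still contribute `3n`, so there are exactly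
`n` of them, and district-fairness for the element districts says that they cover `U`.
-/

open Finset

/-- Welfare in the X3C reduction instance: district `Sum.inl i` corresponds to
element `eᵢ` and values project `Sum.inl j` (set `Sⱼ`) at 1 iff `eᵢ ∈ Sⱼ`;
dummy districts `Sum.inr` value every dummy project `Sum.inr` at 1. -/
def swX3C {n m M D : ℕ} (S : Fin m → Finset (Fin (3 * n))) :
    Fin (3 * n) ⊕ Fin D → Fin m ⊕ Fin M → ℕ
  | Sum.inl i, Sum.inl j => if i ∈ S j then 1 else 0
  | Sum.inl _, Sum.inr _ => 0
  | Sum.inr _, Sum.inl _ => 0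
  | Sum.inr _, Sum.inr _ => 1

section Welfare

variable {n m M D : ℕ} (S : Fin m → Finset (Fin (3 * n))) (W : Finset (Fin m ⊕ Fin M))

lemma sum_swX3C_inl (i : Fin (3 * n)) :
    ∑ x ∈ W, swX3C (D := D) S (.inl i) x = #{j ∈ W.toLeft | i ∈ S j} := by
  simp [sum_sum_eq_sum_toLeft_add_sum_toRight, swX3C]

lemma sum_swX3C_inr (d : Fin D) : ∑ x ∈ W, swX3C S (.inr d) x = #W.toRight := by
  simp [sum_sum_eq_sum_toLeft_add_sum_toRight, swX3C]

lemma one_le_sum_swX3C_inl_iff (i : Fin (3 * n)) :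
    1 ≤ ∑ x ∈ W, swX3C (D := D) S (.inl i) x ↔ i ∈ W.toLeft.biUnion S := by
  simp [sum_swX3C_inl, Nat.one_le_iff_ne_zero, filter_eq_empty_iff]

lemma sum_sum_swX3C :
    ∑ d, ∑ x ∈ W, swX3C (D := D) S d x = ∑ j ∈ W.toLeft, #(S j) + D * #W.toRight := by
  have double_count : ∑ i, #{j ∈ W.toLeft | i ∈ S j} = ∑ j ∈ W.toLeft, #(S j) := by
    simpa [bipartiteAbove, bipartiteBelow] using
      sum_card_bipartiteAbove_eq_sum_card_bipartiteBelow (fun i j => i ∈ S j) (s := univ)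
        (t := W.toLeft)
  simp [Fintype.sum_sum_type, sum_swX3C_inl, sum_swX3C_inr, double_count]

end Welfare

lemma card_toLeft_eq_of_le_welfare {n m M : ℕ} (W : Finset (Fin m ⊕ Fin (2 * n + M)))
    (hM : 3 * m < M) (hW : #W ≤ 3 * n + M)
    (hwel : 3 * n + (2 * n + M) * M ≤ 3 * #W.toLeft + M * #W.toRight) :
    #W.toLeft = n := by
  have hleft : #W.toLeft ≤ m := by simpa using card_le_univ W.toLeft
  have hright : #W.toRight ≤ 2 * n + M := by simpa using card_le_univ W.toRight
  have hsplit := card_toLeft_add_card_toRight (u := W)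
  have all_dummies : #W.toRight = 2 * n + M := by
    by_contra hne
    have : M * (#W.toRight + 1) ≤ M * (2 * n + M) := Nat.mul_le_mul_left M (by omega)
    nlinarith
  rw [all_dummies] at hwel hsplit
  nlinarith

/-- in the X3C reduction instance (with `M = 3mn + 1`, `M` dummy
districts, `2n + M` dummy projects, unit costs, budget `3n + M`, and fair
shares `1`), a district-fair budget-feasible outcome of social welfare at
least `3n + (2n + M)·M` exists iff the X3C instance has a solution. -/
theorem x3c_reduction_correct (n m : ℕ) (hn : 0 < n)
    (S : Fin m → Finset (Fin (3 * n))) (hS : ∀ j, (S j).card = 3) :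
    (∃ W : Finset (Fin m ⊕ Fin (2 * n + (3 * m * n + 1))),
        W.card ≤ 3 * n + (3 * m * n + 1) ∧
        (∀ d : Fin (3 * n) ⊕ Fin (3 * m * n + 1),
          1 ≤ ∑ x ∈ W, swX3C S d x) ∧
        3 * n + (2 * n + (3 * m * n + 1)) * (3 * m * n + 1) ≤
          ∑ d : Fin (3 * n) ⊕ Fin (3 * m * n + 1), ∑ x ∈ W, swX3C S d x) ↔
      ∃ T : Finset (Fin m), T.card = n ∧ T.biUnion S = Finset.univ := by
  set M := 3 * m * n + 1
  constructor
  · rintro ⟨W, hW, hfair, hwel⟩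
    have hM : 3 * m < M := Nat.lt_succ_of_le (Nat.le_mul_of_pos_right _ hn)
    simp only [sum_sum_swX3C, hS, sum_const, smul_eq_mul] at hwel
    refine ⟨W.toLeft, card_toLeft_eq_of_le_welfare W hM hW (by linarith), ?_⟩
    exact eq_univ_of_forall fun i => (one_le_sum_swX3C_inl_iff S W i).1 (hfair (.inl i))
  · rintro ⟨T, hT, hcover⟩
    refine ⟨T.disjSum univ, ?_, ?_, ?_⟩
    · rw [card_disjSum, hT, card_univ, Fintype.card_fin]
      omega
    · rintro (i | d)
      · rw [one_le_sum_swX3C_inl_iff, toLeft_disjSum, hcover]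
        exact mem_univ i
      · rw [sum_swX3C_inr, toRight_disjSum, card_univ, Fintype.card_fin]
        omega
    · rw [sum_sum_swX3C, toLeft_disjSum, toRight_disjSum, sum_congr rfl fun j _ => hS j]
      simp [hT, mul_comm]
end
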